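/- For operators A, B on an n-dimensional complex Hilbert space: tr(A*B) = n(n+1)∫ conj(F_A) F_B dμₙ − n² (∫ conj(F_A) dμₙ)(∫ F_B dμₙ), where F_A(p) = tr(pA) and μₙ is the U(n)-invariant probability measure on projective space. -/

import Mathlib

open Matrix MeasureTheory
open scoped ComplexOrder
noncomputable section

/-- The projective space of `ℂⁿ`, identified with the set of rank-one orthogonal projections
(positive semidefinite idempotents of unit trace). -/
def ProjSp (n : ℕ) : Type :=
  {p : Matrix (Fin n) (Fin n) ℂ // p.PosSemidef ∧ p * p = p ∧ p.trace = 1}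

instance (n : ℕ) : MeasurableSpace (Matrix (Fin n) (Fin n) ℂ) :=
  (inferInstance : MeasurableSpace (Fin n → Fin n → ℂ))

instance (n : ℕ) : MeasurableSpace (ProjSp n) :=
  (inferInstance : MeasurableSpace
    {p : Matrix (Fin n) (Fin n) ℂ // p.PosSemidef ∧ p * p = p ∧ p.trace = 1})

/-- The action `p ↦ U p U⁻¹ = U p U*` of the unitary group `U(n)` on the projective space. -/
def projConj {n : ℕ} (U : Matrix.unitaryGroup (Fin n) ℂ) (p : ProjSp n) : ProjSp n :=
  ⟨(U : Matrix (Fin n) (Fin n) ℂ) * p.1 * star (U : Matrix (Fin n) (Fin n) ℂ), by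
    obtain ⟨hpos, hidem, htr⟩ := p.2
    have hU : star (U : Matrix (Fin n) (Fin n) ℂ) * (U : Matrix (Fin n) (Fin n) ℂ) = 1 :=
      Unitary.star_mul_self_of_mem U.2
    refine ⟨?_, ?_, ?_⟩
    · simpa [Matrix.star_eq_conjTranspose] using
        hpos.mul_mul_conjTranspose_same (U : Matrix (Fin n) (Fin n) ℂ)
    · calc (U * p.1 * star (U : Matrix (Fin n) (Fin n) ℂ)) *
            ((U : Matrix (Fin n) (Fin n) ℂ) * p.1 * star (U : Matrix (Fin n) (Fin n) ℂ))
          = (U : Matrix (Fin n) (Fin n) ℂ) * p.1 *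
              (star (U : Matrix (Fin n) (Fin n) ℂ) * (U : Matrix (Fin n) (Fin n) ℂ)) *
              p.1 * star (U : Matrix (Fin n) (Fin n) ℂ) := by
            simp only [Matrix.mul_assoc]
      _ = (U : Matrix (Fin n) (Fin n) ℂ) * p.1 * star (U : Matrix (Fin n) (Fin n) ℂ) := by
            rw [hU]; simp only [Matrix.mul_one, Matrix.mul_assoc, hidem]
    · rw [Matrix.trace_mul_cycle, hU, Matrix.one_mul, htr]⟩


/-!
Replace `conj (tr (p A))` by `tr (p Aᴴ)` and `∫ tr (p B)` by `∫ tr (p B) tr p`: every integral in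
the statement is then a value of the bilinear form `Q (C, B) = ∫ tr (p C) tr (p B) dμ`, and it
suffices to show `Q (C, B) = (tr C tr B + tr (C B)) / (n (n + 1))` on matrix units `e_ab`.
Conjugating by diagonal phases kills `Q (e_ab, e_cd)` unless `{a, c} = {b, d}`; a transposition
shows that `α = Q (e_aa, e_aa)` does not depend on `a`; since `p` has rank one,
`Q (e_ac, e_ca) = Q (e_aa, e_cc)`; conjugating by a square root of a transposition gives
`2 Q (e_aa, e_cc) = α` for `a ≠ c`; and `Q (1, 1) = 1` forces `α = 2 / (n (n + 1))`.
-/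

namespace Matrix

section Semiring
variable {R m : Type*} [Semiring R] [Fintype m] [DecidableEq m]

lemma swap_mul_single (a c x y : m) (r : R) :
    swap R a c * single x y r = single (Equiv.swap a c x) y r := by
  ext i j
  simp [swap, single_apply, PEquiv.toMatrix_toPEquiv_mul, Equiv.swap_apply_eq_iff]

lemma single_mul_swap (a c x y : m) (r : R) :
    single x y r * swap R a c = single x (Equiv.swap a c y) r := by
  ext i j
  simp [swap, single_apply, PEquiv.mul_toMatrix_toPEquiv, Equiv.swap_apply_eq_iff]

end Semiring

lemma diagonal_mul_single_mul_diagonal {R m : Type*} [CommSemiring R] [Fintype m] [DecidableEq m]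
    (d' d : m → R) (a b : m) (r : R) :
    diagonal d' * single a b r * diagonal d = (d' a * d b) • single a b r := by
  ext i j
  simp +contextual [single_apply, diagonal_mul, mul_diagonal, mul_right_comm]

lemma swap_mem_unitaryGroup {R m : Type*} [CommRing R] [StarRing R] [Fintype m] [DecidableEq m]
    (a c : m) : swap R a c ∈ unitaryGroup m R := by
  rw [mem_unitaryGroup_iff, star_eq_conjTranspose, conjTranspose_swap, swap_mul_self]

variable {n : ℕ}

def phaseShift (a : Fin n) : unitaryGroup (Fin n) ℂ :=
  ⟨diagonal fun x => if a = x then Complex.I else 1, by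
    rw [mem_unitaryGroup_iff, star_eq_conjTranspose, diagonal_conjTranspose,
      diagonal_mul_diagonal, ← diagonal_one]
    congr 1
    ext x
    by_cases h : a = x <;> simp [h]⟩

/-- A square root of `swap ℂ a c`; unlike monomial unitaries it mixes the coordinates `a`, `c`. -/
def sqrtSwap (a c : Fin n) : unitaryGroup (Fin n) ℂ :=
  ⟨((1 + Complex.I) / 2) • (1 : Matrix (Fin n) (Fin n) ℂ) + ((1 - Complex.I) / 2) • swap ℂ a c, by
    rw [mem_unitaryGroup_iff']
    simp only [star_eq_conjTranspose, conjTranspose_add, conjTranspose_smul, conjTranspose_one,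
      conjTranspose_swap, add_mul, mul_add, Matrix.smul_mul, Matrix.mul_smul, Matrix.one_mul,
      Matrix.mul_one, swap_mul_self, smul_smul]
    match_scalars <;> norm_num [Complex.ext_iff]⟩

lemma sqrtSwap_comm (a c : Fin n) : sqrtSwap a c = sqrtSwap c a := by
  simp only [sqrtSwap, swap_comm a c]

lemma star_sqrtSwap_mul_single_mul_sqrtSwap (a c : Fin n) :
    star (sqrtSwap a c : Matrix (Fin n) (Fin n) ℂ) * single a a 1 *
        (sqrtSwap a c : Matrix (Fin n) (Fin n) ℂ) =
      (1 / 2 : ℂ) • (single a a 1 + single c c 1) +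
        (Complex.I / 2) • (single c a 1 - single a c 1) := by
  simp only [sqrtSwap, star_eq_conjTranspose, conjTranspose_add, conjTranspose_smul,
    conjTranspose_one, conjTranspose_swap, add_mul, mul_add, Matrix.smul_mul, Matrix.mul_smul,
    Matrix.one_mul, Matrix.mul_one, swap_mul_single, single_mul_swap, smul_smul,
    Equiv.swap_apply_left]
  match_scalars <;> norm_num [Complex.ext_iff]

end Matrix

namespace ProjSp

variable {n : ℕ}

instance : BorelSpace (Matrix (Fin n) (Fin n) ℂ) := Pi.borelSpace

lemma trace_eq_one (p : ProjSp n) : p.1.trace = 1 := p.2.2.2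

lemma ne_zero (p : ProjSp n) : n ≠ 0 := by
  rintro rfl
  simpa using trace_eq_one p

lemma star_apply (p : ProjSp n) (i j : Fin n) : star (p.1 i j) = p.1 j i := by
  simpa using congrFun₂ p.2.1.isHermitian j i

lemma starRingEnd_trace_mul (p : ProjSp n) (A : Matrix (Fin n) (Fin n) ℂ) :
    starRingEnd ℂ (p.1 * A).trace = (p.1 * Aᴴ).trace := by
  rw [starRingEnd_apply, ← trace_conjTranspose, conjTranspose_mul, p.2.1.isHermitian.eq,
    trace_mul_comm]

/-- The `2 × 2` principal minors of `p` are nonnegative and sum to `(tr p)² - tr (p²) = 0`. -/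
lemma apply_mul_apply_eq (p : ProjSp n) (i k : Fin n) :
    p.1 i i * p.1 k k = p.1 i k * p.1 k i := by
  set m : Fin n → Fin n → ℂ := fun i k => p.1 i i * p.1 k k - p.1 i k * p.1 k i
  have hm_nonneg : ∀ i k, 0 ≤ m i k := fun i k => by
    have h := (p.2.1.submatrix ![i, k]).det_nonneg
    rw [det_fin_two] at h
    simpa [m] using h
  have hm_sum : ∑ i, ∑ k, m i k = p.1.trace * p.1.trace - (p.1 * p.1).trace := by
    simp [m, trace, mul_apply, Finset.sum_mul_sum, Finset.sum_sub_distrib]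
  rw [p.2.2.1, trace_eq_one, mul_one, sub_self] at hm_sum
  have hi := (Finset.sum_eq_zero_iff_of_nonneg fun i _ =>
    Finset.sum_nonneg fun k _ => hm_nonneg i k).1 hm_sum i (Finset.mem_univ _)
  exact sub_eq_zero.1 <|
    (Finset.sum_eq_zero_iff_of_nonneg fun k _ => hm_nonneg i k).1 hi k (Finset.mem_univ _)

lemma norm_apply_le_one (p : ProjSp n) (i j : Fin n) : ‖p.1 i j‖ ≤ 1 := by
  have hdiag : ∀ i, ‖p.1 i i‖ ≤ 1 := fun i => by
    have h1 : p.1 i i ≤ 1 := (Finset.single_le_sum (f := fun k => p.1 k k)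
      (fun k _ => p.2.1.diag_nonneg) (Finset.mem_univ i)).trans_eq (trace_eq_one p)
    exact (CStarAlgebra.norm_le_one_iff_of_nonneg _ p.2.1.diag_nonneg).2 h1
  have hsq : ‖p.1 i j‖ ^ 2 ≤ 1 :=
    calc ‖p.1 i j‖ ^ 2 = ‖p.1 i i‖ * ‖p.1 j j‖ := by
          rw [← norm_mul, apply_mul_apply_eq, norm_mul, ← star_apply, norm_star, sq]
      _ ≤ 1 := mul_le_one₀ (hdiag i) (norm_nonneg _) (hdiag j)
  exact (sq_le_one_iff₀ (norm_nonneg _)).1 hsq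

lemma norm_trace_mul_le (p : ProjSp n) (C : Matrix (Fin n) (Fin n) ℂ) :
    ‖(p.1 * C).trace‖ ≤ ∑ i, ∑ j, ‖C j i‖ := by
  simp only [trace, diag, mul_apply]
  refine (norm_sum_le _ _).trans (Finset.sum_le_sum fun i _ =>
    (norm_sum_le _ _).trans (Finset.sum_le_sum fun j _ => ?_))
  rw [norm_mul]
  exact mul_le_of_le_one_left (norm_nonneg _) (norm_apply_le_one p i j)

lemma measurable_trace_mul (C : Matrix (Fin n) (Fin n) ℂ) :
    Measurable fun p : ProjSp n => (p.1 * C).trace :=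
  (by fun_prop : Continuous fun M : Matrix (Fin n) (Fin n) ℂ => (M * C).trace).measurable.comp
    measurable_subtype_coe

lemma measurable_projConj (U : unitaryGroup (Fin n) ℂ) : Measurable (projConj U) :=
  ((by fun_prop : Continuous fun M : Matrix (Fin n) (Fin n) ℂ =>
    (U : Matrix (Fin n) (Fin n) ℂ) * M * star (U : Matrix (Fin n) (Fin n) ℂ)).measurable.comp
    measurable_subtype_coe).subtype_mk

section FiniteMeasure

variable (μ : Measure (ProjSp n)) [IsFiniteMeasure μ]

lemma integrable_trace_mul_mul_trace_mul (C B : Matrix (Fin n) (Fin n) ℂ) :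
    Integrable (fun p : ProjSp n => (p.1 * C).trace * (p.1 * B).trace) μ :=
  Integrable.of_bound ((measurable_trace_mul C).mul (measurable_trace_mul B)).aestronglyMeasurable
    _ (ae_of_all _ fun p => (norm_mul_le _ _).trans
      (mul_le_mul (norm_trace_mul_le p C) (norm_trace_mul_le p B) (norm_nonneg _)
        (by positivity)))

def secondMoment : Matrix (Fin n) (Fin n) ℂ →ₗ[ℂ] Matrix (Fin n) (Fin n) ℂ →ₗ[ℂ] ℂ :=
  LinearMap.mk₂ ℂ (fun C B => ∫ p, (p.1 * C).trace * (p.1 * B).trace ∂μ)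
    (fun C C' B => by
      simp only [mul_add, trace_add, add_mul]
      exact integral_add (integrable_trace_mul_mul_trace_mul μ C B)
        (integrable_trace_mul_mul_trace_mul μ C' B))
    (fun c C B => by
      simp only [Matrix.mul_smul, trace_smul, smul_eq_mul, mul_assoc]
      exact integral_const_mul c _)
    (fun C B B' => by
      simp only [trace_add, mul_add]
      exact integral_add (integrable_trace_mul_mul_trace_mul μ C B)
        (integrable_trace_mul_mul_trace_mul μ C B'))
    (fun c C B => by
      simp only [Matrix.mul_smul, trace_smul, smul_eq_mul, mul_left_comm _ c]
      exact integral_const_mul c _)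

lemma secondMoment_apply (C B : Matrix (Fin n) (Fin n) ℂ) :
    secondMoment μ C B = ∫ p, (p.1 * C).trace * (p.1 * B).trace ∂μ := rfl

lemma secondMoment_comm (C B : Matrix (Fin n) (Fin n) ℂ) :
    secondMoment μ C B = secondMoment μ B C := by
  simp only [secondMoment_apply, mul_comm]

lemma secondMoment_single_single (a b c d : Fin n) :
    secondMoment μ (single a b 1) (single c d 1) = ∫ p, p.1 b a * p.1 d c ∂μ := by
  simp [secondMoment_apply, trace_mul_single]

lemma secondMoment_single_single_swap (a c : Fin n) :
    secondMoment μ (single a c 1) (single c a 1) =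
      secondMoment μ (single a a 1) (single c c 1) := by
  simp only [secondMoment_single_single, apply_mul_apply_eq, mul_comm]

lemma secondMoment_conj (hinv : ∀ U : unitaryGroup (Fin n) ℂ, Measure.map (projConj U) μ = μ)
    (U : unitaryGroup (Fin n) ℂ) (C B : Matrix (Fin n) (Fin n) ℂ) :
    secondMoment μ (star (U : Matrix (Fin n) (Fin n) ℂ) * C * U)
        (star (U : Matrix (Fin n) (Fin n) ℂ) * B * U) = secondMoment μ C B := by
  have hconj : ∀ (p : ProjSp n) M, ((projConj U p).1 * M).trace =
      (p.1 * (star (U : Matrix (Fin n) (Fin n) ℂ) * M * U)).trace := fun p M => by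
    simp only [projConj, Matrix.mul_assoc]
    exact (trace_mul_comm _ _).trans (by simp only [Matrix.mul_assoc])
  have hmeas := (integrable_trace_mul_mul_trace_mul μ C B).aestronglyMeasurable
  simp only [secondMoment_apply, ← hconj]
  refine (integral_map (measurable_projConj U).aemeasurable (hinv U ▸ hmeas)).symm.trans ?_
  rw [hinv U]

lemma secondMoment_single_single_eq_zero
    (hinv : ∀ U : unitaryGroup (Fin n) ℂ, Measure.map (projConj U) μ = μ) {a b c d : Fin n}
    (h : ¬((a = b ∧ c = d) ∨ (a = d ∧ b = c))) :
    secondMoment μ (single a b 1) (single c d 1) = 0 := by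
  by_contra hne
  have key : ∀ x : Fin n, star (if x = c then Complex.I else 1) * (if x = d then Complex.I else 1) *
      star (if x = a then Complex.I else 1) * (if x = b then Complex.I else 1) = 1 := fun x => by
    have := secondMoment_conj μ hinv (phaseShift x) (single a b 1) (single c d 1)
    simp only [phaseShift, star_eq_conjTranspose, diagonal_conjTranspose,
      diagonal_mul_single_mul_diagonal, Pi.star_apply, map_smul, LinearMap.smul_apply,
      smul_eq_mul, ← mul_assoc] at this
    exact (mul_left_eq_self₀.1 this).resolve_right hne
  -- the powers of `I` balance at `x = a` and at `x = c` only if `{a, c} = {b, d}`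
  have ha := key a
  have hc := key c
  clear key
  split_ifs at ha hc <;> subst_vars <;>
    simp_all [Complex.ext_iff, neg_eq_iff_add_eq_zero, one_add_one_eq_two]

lemma secondMoment_single_self_eq_single_self
    (hinv : ∀ U : unitaryGroup (Fin n) ℂ, Measure.map (projConj U) μ = μ) (a c : Fin n) :
    secondMoment μ (single c c 1) (single c c 1) =
      secondMoment μ (single a a 1) (single a a 1) := by
  have h := secondMoment_conj μ hinv ⟨swap ℂ a c, swap_mem_unitaryGroup a c⟩
    (single a a 1) (single a a 1)
  simpa [star_eq_conjTranspose, swap_mul_single, single_mul_swap] using h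

lemma two_mul_secondMoment_single_single
    (hinv : ∀ U : unitaryGroup (Fin n) ℂ, Measure.map (projConj U) μ = μ) {a c : Fin n}
    (hac : a ≠ c) :
    2 * secondMoment μ (single a a 1) (single c c 1) =
      secondMoment μ (single a a 1) (single a a 1) := by
  -- conjugation maps `(e_aa, e_cc)` to `(S + T, S - T)` with `S = (e_aa + e_cc) / 2` and
  -- `T = I (e_ca - e_ac) / 2`, and `Q (T, T) = Q (e_aa, e_cc) / 2` by the rank-one identity
  have h := secondMoment_conj μ hinv (sqrtSwap a c) (single a a 1) (single c c 1)
  rw [star_sqrtSwap_mul_single_mul_sqrtSwap, sqrtSwap_comm,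
    star_sqrtSwap_mul_single_mul_sqrtSwap] at h
  simp only [map_add, map_sub, map_smul, LinearMap.add_apply, LinearMap.sub_apply,
    LinearMap.smul_apply, smul_eq_mul] at h
  simp only [secondMoment_single_single_eq_zero μ hinv, hac, hac.symm, not_false_eq_true,
    and_false, false_and, or_false, and_self, mul_zero, add_zero, zero_add, sub_zero,
    zero_sub] at h
  rw [secondMoment_single_self_eq_single_self μ hinv a c, secondMoment_single_single_swap μ a c,
    secondMoment_single_single_swap μ c a, secondMoment_comm μ (single c c 1)] at h
  linear_combination -2 * h + secondMoment μ (single a a 1) (single c c 1) * Complex.I_sq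

end FiniteMeasure

section ProbabilityMeasure

variable (μ : Measure (ProjSp n)) [IsProbabilityMeasure μ]

lemma secondMoment_one_one : secondMoment μ 1 1 = 1 := by
  simp [secondMoment_apply, trace_eq_one]

lemma secondMoment_single_self
    (hinv : ∀ U : unitaryGroup (Fin n) ℂ, Measure.map (projConj U) μ = μ) (a : Fin n) :
    secondMoment μ (single a a 1) (single a a 1) = 2 / (n * (n + 1)) := by
  have hdiag : ∀ x y : Fin n, secondMoment μ (single x x 1) (single y y 1) =
      secondMoment μ (single a a 1) (single a a 1) / 2 * (1 + if x = y then 1 else 0) := by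
    intro x y
    rw [← secondMoment_single_self_eq_single_self μ hinv a x]
    rcases eq_or_ne x y with rfl | hxy
    · rw [if_pos rfl]
      ring
    · rw [if_neg hxy, ← two_mul_secondMoment_single_single μ hinv hxy]
      ring
  generalize secondMoment μ (single a a 1) (single a a 1) = A at hdiag ⊢
  have hsum : secondMoment μ 1 1 = (n : ℂ) * (n + 1) * (A / 2) := by
    rw [← sum_single_one, map_sum]
    simp only [LinearMap.sum_apply, map_sum, hdiag, ← Finset.mul_sum, Finset.sum_add_distrib,
      Finset.sum_const, Finset.card_univ, Fintype.card_fin, nsmul_eq_mul, mul_one,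
      Finset.sum_ite_eq', Finset.mem_univ, if_true]
    ring
  have hn : (n : ℂ) ≠ 0 := Nat.cast_ne_zero.2 (Fin.pos a).ne'
  have hn' : (n : ℂ) + 1 ≠ 0 := Nat.cast_add_one_ne_zero n
  rw [secondMoment_one_one] at hsum
  field_simp
  linear_combination -2 * hsum

lemma secondMoment_single_single_of_ne
    (hinv : ∀ U : unitaryGroup (Fin n) ℂ, Measure.map (projConj U) μ = μ) {a c : Fin n}
    (hac : a ≠ c) :
    secondMoment μ (single a a 1) (single c c 1) = 1 / (n * (n + 1)) := by
  have h := two_mul_secondMoment_single_single μ hinv hac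
  rw [secondMoment_single_self μ hinv] at h
  linear_combination h / 2

lemma secondMoment_single_single_eq
    (hinv : ∀ U : unitaryGroup (Fin n) ℂ, Measure.map (projConj U) μ = μ) (a b c d : Fin n) :
    secondMoment μ (single a b 1) (single c d 1) =
      ((single a b (1 : ℂ)).trace * (single c d (1 : ℂ)).trace +
        (single a b (1 : ℂ) * single c d 1).trace) / (n * (n + 1)) := by
  by_cases hdiag : a = b ∧ c = d
  · obtain ⟨rfl, rfl⟩ := hdiag
    rcases eq_or_ne a c with rfl | hac
    · simp [secondMoment_single_self μ hinv, one_add_one_eq_two]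
    · simp [secondMoment_single_single_of_ne μ hinv hac, hac]
  by_cases hswap : a = d ∧ b = c
  · obtain ⟨rfl, rfl⟩ := hswap
    have hab : a ≠ b := fun hab => hdiag ⟨hab, hab.symm⟩
    simp [secondMoment_single_single_swap, secondMoment_single_single_of_ne μ hinv hab, hab]
  rw [secondMoment_single_single_eq_zero μ hinv (not_or.2 ⟨hdiag, hswap⟩)]
  have htrace : (single a b (1 : ℂ)).trace * (single c d 1).trace = 0 := by
    by_cases hab : a = b
    · rw [trace_single_eq_of_ne c d _ fun hcd => hdiag ⟨hab, hcd⟩, mul_zero]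
    · rw [trace_single_eq_of_ne a b _ hab, zero_mul]
  have htrace_mul : (single a b (1 : ℂ) * single c d 1).trace = 0 := by
    simp only [trace_single_mul, single_apply, one_smul]
    exact if_neg fun h => hswap ⟨h.2.symm, h.1.symm⟩
  rw [htrace, htrace_mul, add_zero, zero_div]

lemma secondMoment_eq
    (hinv : ∀ U : unitaryGroup (Fin n) ℂ, Measure.map (projConj U) μ = μ)
    (C B : Matrix (Fin n) (Fin n) ℂ) :
    secondMoment μ C B = (C.trace * B.trace + (C * B).trace) / (n * (n + 1)) := by
  let traceForm : Matrix (Fin n) (Fin n) ℂ →ₗ[ℂ] Matrix (Fin n) (Fin n) ℂ →ₗ[ℂ] ℂ :=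
    LinearMap.mk₂ ℂ (fun C B => (C.trace * B.trace + (C * B).trace) / (n * (n + 1)))
      (fun _ _ _ => by simp only [trace_add, Matrix.add_mul]; ring)
      (fun _ _ _ => by simp only [trace_smul, Matrix.smul_mul, smul_eq_mul]; ring)
      (fun _ _ _ => by simp only [trace_add, Matrix.mul_add]; ring)
      (fun _ _ _ => by simp only [trace_smul, Matrix.mul_smul, smul_eq_mul]; ring)
  have h : secondMoment μ = traceForm :=
    LinearMap.ext_basis (stdBasis ℂ (Fin n) (Fin n)) (stdBasis ℂ (Fin n) (Fin n))
      fun ⟨a, b⟩ ⟨c, d⟩ => by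
        rw [stdBasis_eq_single, stdBasis_eq_single, secondMoment_single_single_eq μ hinv]
        rfl
  exact LinearMap.congr_fun₂ h C B

lemma integral_trace_mul
    (hinv : ∀ U : unitaryGroup (Fin n) ℂ, Measure.map (projConj U) μ = μ)
    (C : Matrix (Fin n) (Fin n) ℂ) :
    ∫ p, (p.1 * C).trace ∂μ = C.trace / n := by
  have hn : (n : ℂ) ≠ 0 := Nat.cast_ne_zero.2 (nonempty_of_isProbabilityMeasure μ).some.ne_zero
  have h : ∫ p, (p.1 * C).trace ∂μ = secondMoment μ C 1 := by
    simp [secondMoment_apply, trace_eq_one]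
  rw [h, secondMoment_eq μ hinv, trace_one, Matrix.mul_one, Fintype.card_fin]
  field_simp

end ProbabilityMeasure

end ProjSp

/-- Inverse trace-integral formula: for operators `A, B` on `ℂⁿ`,
`tr(A*B) = n(n+1) ∫ conj(F_A) F_B dμₙ − n² (∫ conj(F_A) dμₙ)(∫ F_B dμₙ)`,
with `F_A(p) = tr(pA)` and `μₙ` the `U(n)`-invariant probability measure. -/
theorem trace_eq_integrals (n : ℕ) (A B : Matrix (Fin n) (Fin n) ℂ)
    (μ : Measure (ProjSp n)) [IsProbabilityMeasure μ]
    (hinv : ∀ U : Matrix.unitaryGroup (Fin n) ℂ, Measure.map (projConj U) μ = μ) :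
    (Aᴴ * B).trace =
      (n : ℂ) * ((n : ℂ) + 1) *
          ∫ p : ProjSp n, (starRingEnd ℂ) ((p.1 * A).trace) * (p.1 * B).trace ∂μ -
        (n : ℂ) ^ 2 * (∫ p : ProjSp n, (starRingEnd ℂ) ((p.1 * A).trace) ∂μ) *
          (∫ p : ProjSp n, (p.1 * B).trace ∂μ) := by
  have hn : (n : ℂ) ≠ 0 := Nat.cast_ne_zero.2 (nonempty_of_isProbabilityMeasure μ).some.ne_zero
  simp only [ProjSp.starRingEnd_trace_mul]
  rw [← ProjSp.secondMoment_apply, ProjSp.secondMoment_eq μ hinv, ProjSp.integral_trace_mul μ hinv,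
    ProjSp.integral_trace_mul μ hinv, trace_conjTranspose]
  field_simp
  ring
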